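/- The circumradius η(a,b,c) of a triangle with side lengths a, b, c, each lying in [2, 2.51], is monotonically increasing in each of a, b, and c. -/
import Mathlib


set_option maxHeartbeats 1000000

noncomputable section

def ufun (a b c : ℝ) : ℝ := -a^2 - b^2 - c^2 + 2*a*b + 2*a*c + 2*b*c

/-- The circumradius of a triangle with side lengths a, b, c. -/
def eta (a b c : ℝ) : ℝ := a*b*c / Real.sqrt (ufun (a^2) (b^2) (c^2))

lemma ufun_pos' {x y z : ℝ} (hx1 : 4 ≤ x) (hx2 : x ≤ 6.3001)
    (hy1 : 4 ≤ y) (hy2 : y ≤ 6.3001) (hz1 : 4 ≤ z) (hz2 : z ≤ 6.3001) :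
    0 < ufun x y z := by
  have hyz : (y-z)^2 ≤ 2.3001^2 := by nlinarith
  have hlin : (9.6999:ℝ) ≤ 2*y+2*z-x := by linarith
  have hprod : (4:ℝ)*9.6999 ≤ x*(2*y+2*z-x) :=
    mul_le_mul hx1 hlin (by norm_num) (by linarith)
  have hid : ufun x y z = x*(2*y+2*z-x) - (y-z)^2 := by unfold ufun; ring
  rw [hid]; nlinarith

lemma ufun_pos {a b c : ℝ} (ha : a ∈ Set.Icc (2:ℝ) 2.51) (hb : b ∈ Set.Icc (2:ℝ) 2.51)
    (hc : c ∈ Set.Icc (2:ℝ) 2.51) : 0 < ufun (a^2) (b^2) (c^2) := by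
  obtain ⟨ha1, ha2⟩ := ha; obtain ⟨hb1, hb2⟩ := hb; obtain ⟨hc1, hc2⟩ := hc
  exact ufun_pos' (by nlinarith) (by nlinarith) (by nlinarith) (by nlinarith)
    (by nlinarith) (by nlinarith)

lemma eta_mono_first {a a' b c : ℝ} (ha : a ∈ Set.Icc (2:ℝ) 2.51)
    (ha' : a' ∈ Set.Icc (2:ℝ) 2.51) (hb : b ∈ Set.Icc (2:ℝ) 2.51)
    (hc : c ∈ Set.Icc (2:ℝ) 2.51) (h : a < a') : eta a b c < eta a' b c := by
  have u1 := ufun_pos ha hb hc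
  have u2 := ufun_pos ha' hb hc
  obtain ⟨ha1, ha2⟩ := ha
  obtain ⟨ha'1, ha'2⟩ := ha'
  obtain ⟨hb1, hb2⟩ := hb
  obtain ⟨hc1, hc2⟩ := hc
  have hap : (0:ℝ) < a := by linarith
  have ha'p : (0:ℝ) < a' := by linarith
  have hbp : (0:ℝ) < b := by linarith
  have hcp : (0:ℝ) < c := by linarith
  have s1 : 0 < Real.sqrt (ufun (a^2) (b^2) (c^2)) := Real.sqrt_pos.2 u1
  have s2 : 0 < Real.sqrt (ufun (a'^2) (b^2) (c^2)) := Real.sqrt_pos.2 u2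
  unfold eta
  rw [div_lt_div_iff₀ s1 s2]
  have e1 : a*b*c * Real.sqrt (ufun (a'^2) (b^2) (c^2))
      = Real.sqrt ((a*b*c)^2 * ufun (a'^2) (b^2) (c^2)) := by
    rw [Real.sqrt_mul (sq_nonneg _), Real.sqrt_sq (by positivity)]
  have e2 : a'*b*c * Real.sqrt (ufun (a^2) (b^2) (c^2))
      = Real.sqrt ((a'*b*c)^2 * ufun (a^2) (b^2) (c^2)) := by
    rw [Real.sqrt_mul (sq_nonneg _), Real.sqrt_sq (by positivity)]
  rw [e1, e2]
  apply Real.sqrt_lt_sqrt (by positivity)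
  have key : (a'*b*c)^2 * ufun (a^2) (b^2) (c^2) - (a*b*c)^2 * ufun (a'^2) (b^2) (c^2)
      = b^2*c^2*((a'^2-a^2)*(a^2*a'^2-(b^2-c^2)^2)) := by
    unfold ufun; ring
  have hd1 : b^2 - c^2 ≤ 2.3001 := by nlinarith
  have hd2 : c^2 - b^2 ≤ 2.3001 := by nlinarith
  have hbc : (b^2-c^2)^2 ≤ 2.3001^2 := by
    nlinarith [mul_nonneg (by linarith : (0:ℝ) ≤ 2.3001-(b^2-c^2))
      (by linarith : (0:ℝ) ≤ 2.3001+(b^2-c^2))]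
  have ha4 : (4:ℝ) ≤ a^2 := by nlinarith
  have ha'4 : (4:ℝ) ≤ a'^2 := by nlinarith
  have h16 : (16:ℝ) ≤ a^2*a'^2 := by
    have h44 := mul_le_mul ha4 ha'4 (by norm_num : (0:ℝ) ≤ 4) (sq_nonneg a)
    linarith
  have hfac : 0 < b^2*c^2*((a'^2-a^2)*(a^2*a'^2-(b^2-c^2)^2)) := by
    apply mul_pos (by positivity)
    exact mul_pos (by nlinarith) (by nlinarith)
  linarith [key]

lemma eta_swap12 (a b c : ℝ) : eta a b c = eta b a c := by
  unfold eta
  rw [show ufun (a^2) (b^2) (c^2) = ufun (b^2) (a^2) (c^2) by unfold ufun; ring]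
  ring_nf

lemma eta_swap13 (a b c : ℝ) : eta a b c = eta c b a := by
  unfold eta
  rw [show ufun (a^2) (b^2) (c^2) = ufun (c^2) (b^2) (a^2) by unfold ufun; ring]
  ring_nf

/-- On [2, 2.51] the circumradius η(a,b,c) is monotonically (strictly)
increasing in each of a, b, c. -/
theorem eta_strictMono_on :
    (∀ a a' b c : ℝ, a ∈ Set.Icc (2:ℝ) 2.51 → a' ∈ Set.Icc (2:ℝ) 2.51 →
      b ∈ Set.Icc (2:ℝ) 2.51 → c ∈ Set.Icc (2:ℝ) 2.51 →
      a < a' → eta a b c < eta a' b c) ∧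
    (∀ a b b' c : ℝ, a ∈ Set.Icc (2:ℝ) 2.51 → b ∈ Set.Icc (2:ℝ) 2.51 →
      b' ∈ Set.Icc (2:ℝ) 2.51 → c ∈ Set.Icc (2:ℝ) 2.51 →
      b < b' → eta a b c < eta a b' c) ∧
    (∀ a b c c' : ℝ, a ∈ Set.Icc (2:ℝ) 2.51 → b ∈ Set.Icc (2:ℝ) 2.51 →
      c ∈ Set.Icc (2:ℝ) 2.51 → c' ∈ Set.Icc (2:ℝ) 2.51 →
      c < c' → eta a b c < eta a b c') := by
  refine ⟨fun a a' b c ha ha' hb hc h => eta_mono_first ha ha' hb hc h,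
    fun a b b' c ha hb hb' hc h => ?_, fun a b c c' ha hb hc hc' h => ?_⟩
  · rw [eta_swap12 a b c, eta_swap12 a b' c]
    exact eta_mono_first hb hb' ha hc h
  · rw [eta_swap13 a b c, eta_swap13 a b c']
    exact eta_mono_first hc hc' hb ha h
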